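/- Suppose u₀ ≠ 0, v₀ = 0, and α(γ₀ + α/β²) ≤ ‖u₀‖²/8. Then the projection of (u₀, 0, γ₀) onto C̃_α equals {(u₀/2, v, γ₀ + α/β²) : v ∈ X, ‖v‖ = √(−2α(γ₀ + α/β²) + ‖u₀‖²/4)}. -/

import Mathlib

variable {X : Type*} [NormedAddCommGroup X] [InnerProductSpace ℝ X]

/-- Squared β-weighted distance on `X × X × ℝ`. -/
noncomputable def d2 (β : ℝ) (p q : X × X × ℝ) : ℝ :=
  ‖p.1 - q.1‖^2 + ‖p.2.1 - q.2.1‖^2 + β^2 * (p.2.2 - q.2.2)^2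

/-- The set of nearest points of `S` to `z` in the β-weighted norm. -/
noncomputable def projSet (β : ℝ) (S : Set (X × X × ℝ)) (z : X × X × ℝ) :
    Set (X × X × ℝ) :=
  {p | p ∈ S ∧ ∀ q ∈ S, d2 β p z ≤ d2 β q z}

/-- The set `C̃_α`. -/
def Ctilde (α : ℝ) : Set (X × X × ℝ) := {p | ‖p.1‖^2 - ‖p.2.1‖^2 = 2 * α * p.2.2}

/-- The set `C_α`. -/
def Cα (α : ℝ) : Set (X × X × ℝ) := {p | (inner ℝ p.1 p.2.1 : ℝ) = α * p.2.2}

/-!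
On `C̃_α` the constraint eliminates `‖v‖²`, and completing squares turns the squared distance to
`(u₀, 0, γ₀)` into `2‖u - u₀/2‖² + β²(γ - (γ₀ + α/β²))²` plus a constant. The nearest points are
therefore exactly the points of `C̃_α` with `u = u₀/2` and `γ = γ₀ + α/β²`, for which the constraint
reads `‖v‖² = ‖u₀‖²/4 - 2α(γ₀ + α/β²)`; the hypothesis on `α(γ₀ + α/β²)` makes this nonnegative,
and `u₀ ≠ 0` provides a vector `v` of the required norm.
-/

theorem projSet_eq_of_d2_eq_add {E : Type*} [NormedAddCommGroup E] {β : ℝ}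
    {S : Set (E × E × ℝ)} {z : E × E × ℝ} (g : E × E × ℝ → ℝ) (c : ℝ)
    (hd : ∀ p ∈ S, d2 β p z = g p + c) (hg : ∀ p ∈ S, 0 ≤ g p) (hne : ∃ p ∈ S, g p = 0) :
    projSet β S z = {p | p ∈ S ∧ g p = 0} := by
  ext p
  constructor
  · rintro ⟨hp, hmin⟩
    obtain ⟨q, hq, hgq⟩ := hne
    have hle := hmin q hq
    rw [hd p hp, hd q hq, hgq] at hle
    exact ⟨hp, le_antisymm (by linarith) (hg p hp)⟩
  · rintro ⟨hp, hgp⟩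
    refine ⟨hp, fun q hq => ?_⟩
    rw [hd p hp, hd q hq, hgp]
    linarith [hg q hq]

theorem mk_mem_Ctilde_iff {E : Type*} [NormedAddCommGroup E] {α γ : ℝ} {u v : E} :
    (u, v, γ) ∈ Ctilde α ↔ ‖v‖ ^ 2 = ‖u‖ ^ 2 - 2 * α * γ := by
  change _ = _ ↔ _
  constructor <;> intro h <;> linarith

theorem d2_eq_of_mem_Ctilde {α β γ γ₀ : ℝ} (hβ : β ≠ 0) {u v : X} (u₀ : X)
    (hp : (u, v, γ) ∈ Ctilde α) :
    d2 β (u, v, γ) (u₀, 0, γ₀) =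
      (2 * ‖u - (2 : ℝ)⁻¹ • u₀‖ ^ 2 + β ^ 2 * (γ - (γ₀ + α / β ^ 2)) ^ 2)
        + (‖u₀‖ ^ 2 / 2 - 2 * α * γ₀ - α ^ 2 / β ^ 2) := by
  have hhalf : ‖u - (2 : ℝ)⁻¹ • u₀‖ ^ 2 = ‖u‖ ^ 2 - inner ℝ u u₀ + ‖u₀‖ ^ 2 / 4 := by
    rw [norm_sub_sq_real, real_inner_smul_right, norm_smul, Real.norm_of_nonneg (by norm_num)]
    ring
  simp only [d2, sub_zero]
  rw [mk_mem_Ctilde_iff.mp hp, norm_sub_sq_real, hhalf]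
  field_simp
  ring

theorem two_mul_sq_norm_add_sq_mul_sq_eq_zero_iff {E : Type*} [NormedAddCommGroup E] {β : ℝ}
    (hβ : β ≠ 0) (x : E) (t : ℝ) :
    2 * ‖x‖ ^ 2 + β ^ 2 * t ^ 2 = 0 ↔ x = 0 ∧ t = 0 := by
  rw [add_eq_zero_iff_of_nonneg (by positivity) (by positivity)]
  simp [hβ]

theorem stmt13_general (α β γ₀ : ℝ) (hβ : 0 < β) (u₀ : X) (hu : u₀ ≠ 0)
    (hcase : α * (γ₀ + α / β^2) ≤ ‖u₀‖^2 / 8) :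
    projSet β (Ctilde α) (u₀, (0 : X), γ₀) =
      {p : X × X × ℝ | ∃ v : X,
        ‖v‖ = Real.sqrt (-2 * α * (γ₀ + α / β^2) + ‖u₀‖^2 / 4) ∧
        p = ((2 : ℝ)⁻¹ • u₀, v, γ₀ + α / β^2)} := by
  set γs := γ₀ + α / β ^ 2
  set r := -2 * α * γs + ‖u₀‖ ^ 2 / 4 with hr_def
  have hr : 0 ≤ r := by rw [hr_def]; linarith
  have hfiber : ∀ v : X, ((2 : ℝ)⁻¹ • u₀, v, γs) ∈ Ctilde α ↔ ‖v‖ = √r := by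
    intro v
    rw [mk_mem_Ctilde_iff, eq_comm (a := ‖v‖), Real.sqrt_eq_iff_eq_sq hr (norm_nonneg v),
      norm_smul, Real.norm_of_nonneg (by norm_num), hr_def]
    constructor <;> intro h <;> linarith
  have : Nontrivial X := nontrivial_of_ne u₀ 0 hu
  obtain ⟨w, hw⟩ := exists_norm_eq X (Real.sqrt_nonneg r)
  rw [projSet_eq_of_d2_eq_add
    (fun p => 2 * ‖p.1 - (2 : ℝ)⁻¹ • u₀‖ ^ 2 + β ^ 2 * (p.2.2 - γs) ^ 2) _
    (fun ⟨_, _, _⟩ hp => d2_eq_of_mem_Ctilde hβ.ne' u₀ hp) (fun _ _ => by positivity)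
    ⟨_, (hfiber w).mpr hw, by simp⟩]
  ext ⟨u, v, γ⟩
  simp only [Set.mem_ofPred_eq, two_mul_sq_norm_add_sq_mul_sq_eq_zero_iff hβ.ne', sub_eq_zero,
    Prod.mk.injEq]
  constructor
  · rintro ⟨hC, rfl, rfl⟩
    exact ⟨v, (hfiber v).mp hC, rfl, rfl, rfl⟩
  · rintro ⟨v, hv, rfl, rfl, rfl⟩
    exact ⟨(hfiber v).mpr hv, rfl, rfl⟩

theorem stmt13 (α β γ₀ : ℝ) (hα : α ≠ 0) (hβ : 0 < β) (u₀ : X) (hu : u₀ ≠ 0)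
    (hcase : α * (γ₀ + α / β^2) ≤ ‖u₀‖^2 / 8) :
    projSet β (Ctilde α) (u₀, (0 : X), γ₀) =
      {p : X × X × ℝ | ∃ v : X,
        ‖v‖ = Real.sqrt (-2 * α * (γ₀ + α / β^2) + ‖u₀‖^2 / 4) ∧
        p = ((2 : ℝ)⁻¹ • u₀, v, γ₀ + α / β^2)} :=
  stmt13_general α β γ₀ hβ u₀ hu hcase
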